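/- For every k ≥ 1, the recursively defined encoding operator P_{2k+1} (with P₃ = C₁₀C₀₂C₂₁ and P_{2k+1} = (I₄⊗P_{2k-1})(P₃⊗I_{2^{2k-2}})) satisfies P_{2k+1}† Y_{2k+1} P_{2k+1} = (-1)^k σ_y ⊗ I_{2^{2k}}. -/

import Mathlib

open Matrix Kronecker

noncomputable def sx : Matrix (Fin 2) (Fin 2) ℂ := !![0, 1; 1, 0]
noncomputable def sy : Matrix (Fin 2) (Fin 2) ℂ := !![0, -Complex.I; Complex.I, 0]
noncomputable def sz : Matrix (Fin 2) (Fin 2) ℂ := !![1, 0; 0, -1]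

/-- `n`-fold Kronecker tensor power of a `2 × 2` complex matrix, as a `2^n × 2^n` matrix. -/
noncomputable def tpow (A : Matrix (Fin 2) (Fin 2) ℂ) :
    (n : ℕ) → Matrix (Fin (2 ^ n)) (Fin (2 ^ n)) ℂ
  | 0 => 1
  | n + 1 =>
    Matrix.reindex (finProdFinEquiv.trans (finCongr (by rw [pow_succ, Nat.mul_comm])))
      (finProdFinEquiv.trans (finCongr (by rw [pow_succ, Nat.mul_comm])))
      (A ⊗ₖ tpow A n)

/-- Kronecker product of square matrices indexed by `Fin m`, `Fin n`, as a matrix indexed by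
`Fin (m * n)`; the first factor is the most significant part of the index. -/
noncomputable def kronF {m n : ℕ} (A : Matrix (Fin m) (Fin m) ℂ)
    (B : Matrix (Fin n) (Fin n) ℂ) : Matrix (Fin (m * n)) (Fin (m * n)) ℂ :=
  Matrix.reindex finProdFinEquiv finProdFinEquiv (A ⊗ₖ B)

/-- Cast a square matrix along an equality of sizes. -/
noncomputable def castM {a b : ℕ} (h : a = b) (A : Matrix (Fin a) (Fin a) ℂ) :
    Matrix (Fin b) (Fin b) ℂ :=
  Matrix.reindex (finCongr h) (finCongr h) A

/-- The CNOT gate on 3 qubits `|q₂q₁q₀⟩` (index `4q₂+2q₁+q₀`) where qubit `c` controls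
qubit `t`: bit `t` of the basis state is flipped iff bit `c` equals 1. -/
noncomputable def cnot3 (c t : ℕ) : Matrix (Fin 8) (Fin 8) ℂ :=
  Matrix.of fun r s =>
    if r.val = (if Nat.testBit s.val c then s.val ^^^ 2 ^ t else s.val) then 1 else 0

noncomputable def P3 : Matrix (Fin 8) (Fin 8) ℂ := cnot3 1 0 * cnot3 0 2 * cnot3 2 1

/-- The recursively defined encoding operators `P_{2k+1}`:
`P₃ = C₁₀C₀₂C₂₁` and `P_{2k+1} = (I₄ ⊗ P_{2k-1}) (P₃ ⊗ I_{2^{2k-2}})`. -/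
noncomputable def Pod : (k : ℕ) → Matrix (Fin (2 ^ (2 * k + 1))) (Fin (2 ^ (2 * k + 1))) ℂ
  | 0 => 1
  | 1 => castM (by norm_num) P3
  | (k + 2) =>
    castM (by rw [show 2 * (k + 2) + 1 = (2 * (k + 1) + 1) + 2 by ring, pow_add]; ring)
      (kronF (1 : Matrix (Fin 4) (Fin 4) ℂ) (Pod (k + 1))) *
    castM (by rw [show 2 * (k + 2) + 1 = (2 * k + 2) + 3 by ring, pow_add]; ring)
      (kronF P3 (1 : Matrix (Fin (2 ^ (2 * k + 2))) (Fin (2 ^ (2 * k + 2))) ℂ))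


lemma castM_self {a : ℕ} (h : a = a) (A : Matrix (Fin a) (Fin a) ℂ) : castM h A = A := by
  simp [castM]

lemma castM_mul {a b : ℕ} (h : a = b) (A B : Matrix (Fin a) (Fin a) ℂ) :
    castM h A * castM h B = castM h (A * B) := by
  subst h; simp [castM_self]

lemma castM_conjT {a b : ℕ} (h : a = b) (A : Matrix (Fin a) (Fin a) ℂ) :
    (castM h A)ᴴ = castM h Aᴴ := by
  subst h; simp [castM_self]

lemma castM_smul {a b : ℕ} (h : a = b) (c : ℂ) (A : Matrix (Fin a) (Fin a) ℂ) :
    castM h (c • A) = c • castM h A := by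
  subst h; simp [castM_self]

lemma castM_trans {a b c : ℕ} (h1 : a = b) (h2 : b = c) (A : Matrix (Fin a) (Fin a) ℂ) :
    castM h2 (castM h1 A) = castM (h1.trans h2) A := by
  subst h1; subst h2; simp [castM_self]

lemma castM_one {a b : ℕ} (h : a = b) : castM h (1 : Matrix (Fin a) (Fin a) ℂ) = 1 := by
  subst h; simp [castM_self]

lemma castM_inj {a b : ℕ} (h : a = b) {A B : Matrix (Fin a) (Fin a) ℂ} :
    castM h A = castM h B ↔ A = B := by
  subst h; simp [castM_self]

lemma kronF_apply {m n : ℕ} (A : Matrix (Fin m) (Fin m) ℂ) (B : Matrix (Fin n) (Fin n) ℂ)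
    (r s : Fin (m * n)) :
    kronF A B r s = A r.divNat s.divNat * B r.modNat s.modNat := by
  simp [kronF, Matrix.reindex_apply, Matrix.submatrix_apply, Matrix.kroneckerMap_apply]

lemma castM_apply {a b : ℕ} (h : a = b) (A : Matrix (Fin a) (Fin a) ℂ) (r s : Fin b) :
    castM h A r s = A (Fin.cast h.symm r) (Fin.cast h.symm s) := by
  subst h; simp [castM_self]
lemma kronF_mul {m n : ℕ} (A C : Matrix (Fin m) (Fin m) ℂ) (B D : Matrix (Fin n) (Fin n) ℂ) :
    kronF A B * kronF C D = kronF (A * C) (B * D) := by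
  simp only [kronF, Matrix.reindex_apply]
  rw [Matrix.submatrix_mul_equiv _ _ _ finProdFinEquiv.symm, Matrix.mul_kronecker_mul]

lemma kronF_conjT {m n : ℕ} (A : Matrix (Fin m) (Fin m) ℂ) (B : Matrix (Fin n) (Fin n) ℂ) :
    (kronF A B)ᴴ = kronF Aᴴ Bᴴ := by
  ext r s
  simp [Matrix.conjTranspose_apply, kronF_apply, mul_comm]

lemma kronF_one_one {m n : ℕ} :
    kronF (1 : Matrix (Fin m) (Fin m) ℂ) (1 : Matrix (Fin n) (Fin n) ℂ) = 1 := by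
  simp only [kronF, Matrix.one_kronecker_one]
  ext r s
  simp only [Matrix.reindex_apply, Matrix.submatrix_apply, Matrix.one_apply,
    finProdFinEquiv_symm_apply, Prod.mk.injEq]
  have hiff : (r.divNat = s.divNat ∧ r.modNat = s.modNat) ↔ r = s := by
    rw [← Prod.mk.injEq, ← finProdFinEquiv_symm_apply, ← finProdFinEquiv_symm_apply]
    exact (Equiv.apply_eq_iff_eq _)
  simp [hiff]

lemma kronF_smul_right {m n : ℕ} (c : ℂ) (A : Matrix (Fin m) (Fin m) ℂ)
    (B : Matrix (Fin n) (Fin n) ℂ) : kronF A (c • B) = c • kronF A B := by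
  ext r s; simp [kronF_apply, mul_left_comm, mul_comm]

lemma kronF_castM_left {a b n : ℕ} (h : a = b) (h2 : a * n = b * n)
    (A : Matrix (Fin a) (Fin a) ℂ) (B : Matrix (Fin n) (Fin n) ℂ) :
    kronF (castM h A) B = castM h2 (kronF A B) := by
  subst h; simp [castM_self]

lemma kronF_castM_right {a b m : ℕ} (h : a = b) (h2 : m * a = m * b)
    (A : Matrix (Fin m) (Fin m) ℂ) (B : Matrix (Fin a) (Fin a) ℂ) :
    kronF A (castM h B) = castM h2 (kronF A B) := by
  subst h; simp [castM_self]

lemma kronF_assoc {m n p : ℕ} (h : m * n * p = m * (n * p)) (A : Matrix (Fin m) (Fin m) ℂ)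
    (B : Matrix (Fin n) (Fin n) ℂ) (C : Matrix (Fin p) (Fin p) ℂ) :
    castM h (kronF (kronF A B) C) = kronF A (kronF B C) := by
  ext r s
  simp only [castM_apply, kronF_apply]
  have e1 : ∀ (x : Fin (m * (n * p))),
      ((Fin.cast h.symm x).divNat.divNat : ℕ) = (x.divNat : ℕ) := by
    intro x
    have key : ∀ v : ℕ, v / p / n = v / (n * p) := fun v => by
      rw [Nat.div_div_eq_div_mul, Nat.mul_comm]
    simp [Fin.divNat, key]
  have e2 : ∀ (x : Fin (m * (n * p))),
      ((Fin.cast h.symm x).divNat.modNat : ℕ) = (x.modNat.divNat : ℕ) := by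
    intro x
    have key : ∀ v : ℕ, v / p % n = v % (n * p) / p := fun v => by
      rw [Nat.mul_comm n p, Nat.mod_mul_right_div_self]
    simp [Fin.divNat, Fin.modNat, key]
  have e3 : ∀ (x : Fin (m * (n * p))),
      ((Fin.cast h.symm x).modNat : ℕ) = (x.modNat.modNat : ℕ) := by
    intro x
    have key : ∀ v : ℕ, v % p = v % (n * p) % p := fun v =>
      (Nat.mod_mod_of_dvd v ⟨n, Nat.mul_comm n p⟩).symm
    simp [Fin.modNat, ← key]
  rw [show (Fin.cast h.symm r).divNat.divNat = r.divNat from Fin.ext (e1 r),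
    show (Fin.cast h.symm s).divNat.divNat = s.divNat from Fin.ext (e1 s),
    show (Fin.cast h.symm r).divNat.modNat = r.modNat.divNat from Fin.ext (e2 r),
    show (Fin.cast h.symm s).divNat.modNat = s.modNat.divNat from Fin.ext (e2 s),
    show (Fin.cast h.symm r).modNat = r.modNat.modNat from Fin.ext (e3 r),
    show (Fin.cast h.symm s).modNat = s.modNat.modNat from Fin.ext (e3 s)]
  ring

lemma tpow_succ (A : Matrix (Fin 2) (Fin 2) ℂ) (n : ℕ) (h : 2 * 2 ^ n = 2 ^ (n + 1)) :
    tpow A (n + 1) = castM h (kronF A (tpow A n)) := by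
  simp only [tpow, kronF, castM, Matrix.reindex_apply, Matrix.submatrix_submatrix]
  rfl

lemma tpow_congr (A : Matrix (Fin 2) (Fin 2) ℂ) {m m' : ℕ} (h : m = m')
    (h2 : 2 ^ m = 2 ^ m') : tpow A m' = castM h2 (tpow A m) := by
  subst h; simp [castM_self]
noncomputable def pm {N : ℕ} (f : ℕ → ℕ) : Matrix (Fin N) (Fin N) ℂ :=
  Matrix.of fun r s => if r.val = f s.val then 1 else 0

lemma cnot3_eq_pm (c t : ℕ) :
    cnot3 c t = pm (fun s => if Nat.testBit s c then s ^^^ 2 ^ t else s) := rfl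

lemma pm_mul {N : ℕ} (f g : ℕ → ℕ) (hg : ∀ s, s < N → g s < N) :
    (pm f * pm g : Matrix (Fin N) (Fin N) ℂ) = pm (fun s => f (g s)) := by
  ext r b
  simp only [Matrix.mul_apply, pm, Matrix.of_apply]
  rw [Finset.sum_eq_single (⟨g b.val, hg b.val b.isLt⟩ : Fin N)]
  · simp
  · intro s _ hs
    have hne : (s.val : ℕ) ≠ g b.val := fun h => hs (Fin.ext h)
    simp [hne]
  · simp

lemma pm_conj {N : ℕ} (f : ℕ → ℕ) (hf : ∀ s, s < N → f s < N)
    (Y : Matrix (Fin N) (Fin N) ℂ) :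
    (pm f)ᴴ * Y * pm f =
      Matrix.of fun a b => Y ⟨f a.val, hf _ a.isLt⟩ ⟨f b.val, hf _ b.isLt⟩ := by
  ext a b
  have h1 : ∀ s : Fin N, ((pm f)ᴴ * Y : Matrix (Fin N) (Fin N) ℂ) a s = Y ⟨f a.val, hf _ a.isLt⟩ s := by
    intro s
    simp only [Matrix.mul_apply, Matrix.conjTranspose_apply, pm, Matrix.of_apply]
    rw [Finset.sum_eq_single (⟨f a.val, hf _ a.isLt⟩ : Fin N)]
    · simp
    · intro r _ hr
      have hne : (r.val : ℕ) ≠ f a.val := fun h => hr (Fin.ext h)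
      simp [hne]
    · simp
  rw [Matrix.of_apply, Matrix.mul_apply]
  simp only [h1, pm, Matrix.of_apply]
  rw [Finset.sum_eq_single (⟨f b.val, hf _ b.isLt⟩ : Fin N)]
  · simpa [pm] using h1 ⟨f b.val, hf _ b.isLt⟩
  · intro s _ hs
    have hne : (s.val : ℕ) ≠ f b.val := fun h => hs (Fin.ext h)
    simp [hne]
  · simp
def g3 : ℕ → ℕ := fun s =>
  (fun s => if Nat.testBit s 1 then s ^^^ 2 ^ 0 else s)
  ((fun s => if Nat.testBit s 0 then s ^^^ 2 ^ 2 else s)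
  ((fun s => if Nat.testBit s 2 then s ^^^ 2 ^ 1 else s) s))

lemma P3_eq : P3 = (pm g3 : Matrix (Fin 8) (Fin 8) ℂ) := by
  rw [P3, cnot3_eq_pm, cnot3_eq_pm, cnot3_eq_pm, mul_assoc,
    pm_mul _ _ (by decide)]
  rw [pm_mul _ _ (by decide)]
  rfl
noncomputable def Y4 : Matrix (Fin 4) (Fin 4) ℂ := castM (by norm_num) (kronF sy sy)
noncomputable def Y8 : Matrix (Fin 8) (Fin 8) ℂ := castM (by norm_num) (kronF Y4 sy)
noncomputable def SyI8 : Matrix (Fin 8) (Fin 8) ℂ :=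
  castM (by norm_num) (kronF sy (1 : Matrix (Fin 4) (Fin 4) ℂ))

lemma sy_apply (r s : Fin 2) : sy r s =
    if r.val = 0 ∧ s.val = 1 then -Complex.I
    else if r.val = 1 ∧ s.val = 0 then Complex.I else 0 := by
  fin_cases r <;> fin_cases s <;> simp [sy]

lemma key8 : P3ᴴ * Y8 * P3 = (-1 : ℂ) • SyI8 := by
  rw [P3_eq, pm_conj g3 (by decide)]
  ext a b
  fin_cases a <;> fin_cases b <;>
  · simp only [Matrix.of_apply, Matrix.smul_apply, Y8, Y4, SyI8, castM_apply, kronF_apply,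
      sy_apply, Matrix.one_apply, Fin.coe_cast, Fin.coe_divNat, Fin.coe_modNat, Fin.mk.injEq,
      smul_eq_mul]
    simp (config := { decide := true }) [g3, Nat.testBit, Fin.ext_iff]
lemma kronF_smul_left {m n : ℕ} (c : ℂ) (A : Matrix (Fin m) (Fin m) ℂ)
    (B : Matrix (Fin n) (Fin n) ℂ) : kronF (c • A) B = c • kronF A B := by
  ext r s; simp [kronF_apply]; ring

lemma kronF_castM_left' {a b n : ℕ} (h : a = b)
    (A : Matrix (Fin a) (Fin a) ℂ) (B : Matrix (Fin n) (Fin n) ℂ) :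
    kronF (castM h A) B = castM (by rw [h] : a * n = b * n) (kronF A B) := by
  subst h; simp [castM_self]

lemma kronF_castM_right' {a b m : ℕ} (h : a = b)
    (A : Matrix (Fin m) (Fin m) ℂ) (B : Matrix (Fin a) (Fin a) ℂ) :
    kronF A (castM h B) = castM (by rw [h] : m * a = m * b) (kronF A B) := by
  subst h; simp [castM_self]

lemma kronF_assoc' {m n p : ℕ} (A : Matrix (Fin m) (Fin m) ℂ)
    (B : Matrix (Fin n) (Fin n) ℂ) (C : Matrix (Fin p) (Fin p) ℂ) :
    kronF A (kronF B C) = castM (mul_assoc m n p) (kronF (kronF A B) C) :=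
  (kronF_assoc (mul_assoc m n p) A B C).symm

lemma one_eq_castM {a b : ℕ} (h : a = b) :
    (1 : Matrix (Fin b) (Fin b) ℂ) = castM h 1 := (castM_one h).symm

lemma conj_castM {a b : ℕ} (h : a = b) (P Y : Matrix (Fin a) (Fin a) ℂ) :
    (castM h P)ᴴ * castM h Y * castM h P = castM h (Pᴴ * Y * P) := by
  subst h; simp [castM_self]

lemma conj_kronF {m n : ℕ} (U A : Matrix (Fin m) (Fin m) ℂ)
    (V B : Matrix (Fin n) (Fin n) ℂ) :
    (kronF U V)ᴴ * kronF A B * kronF U V = kronF (Uᴴ * A * U) (Vᴴ * B * V) := by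
  rw [kronF_conjT, kronF_mul, kronF_mul]

lemma conj_mul_split {N : ℕ} (A B Y : Matrix (Fin N) (Fin N) ℂ) :
    (A * B)ᴴ * Y * (A * B) = Bᴴ * (Aᴴ * Y * A) * B := by
  simp only [Matrix.conjTranspose_mul, Matrix.mul_assoc]

lemma kron_one_fin1 {m : ℕ} (A : Matrix (Fin m) (Fin m) ℂ) :
    kronF A (1 : Matrix (Fin 1) (Fin 1) ℂ) = castM (mul_one m).symm A := by
  ext r s
  simp [kronF_apply, castM_apply, Matrix.one_apply, Subsingleton.elim r.modNat s.modNat]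
  congr 1 <;> exact Fin.ext (by simp [Fin.divNat, Fin.coe_cast, Nat.div_one])

lemma tpow_succ' (A : Matrix (Fin 2) (Fin 2) ℂ) (n : ℕ) :
    tpow A (n + 1) =
      castM (by rw [pow_succ, Nat.mul_comm] : 2 * 2 ^ n = 2 ^ (n + 1))
        (kronF A (tpow A n)) :=
  tpow_succ A n _

lemma tpow_zero : tpow sy 0 = castM (show (1:ℕ) = 2^0 by norm_num) 1 := by
  rw [castM_one]; rfl

lemma Y4_eq : kronF sy sy = castM (show (4:ℕ) = 2*2 by norm_num) Y4 := by
  rw [Y4, castM_trans, castM_self]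

lemma Y8_eq : kronF Y4 sy = castM (show (8:ℕ) = 4*2 by norm_num) Y8 := by
  rw [Y8, castM_trans, castM_self]

lemma SyI8_eq : SyI8 = castM (by norm_num : 2*4 = 8) (kronF sy (1 : Matrix (Fin 4) (Fin 4) ℂ)) := rfl

lemma base_case :
    (Pod 1)ᴴ * tpow sy (2 * 1 + 1) * Pod 1 =
      ((-1 : ℂ) ^ 1) •
        castM (by rw [pow_succ]; ring)
          (kronF sy (1 : Matrix (Fin (2 ^ (2 * 1))) (Fin (2 ^ (2 * 1))) ℂ)) := by
  have hY : tpow sy (2 * 1 + 1) = castM (by norm_num : (8:ℕ) = 2^(2*1+1)) Y8 := by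
    rw [tpow_congr sy (show 0 + 1 + 1 + 1 = 2 * 1 + 1 by norm_num) (by norm_num),
      tpow_succ', tpow_succ', tpow_succ', tpow_zero]
    rw [kronF_castM_right' (show (1:ℕ) = 2^0 by norm_num)]
    simp only [castM_trans]
    rw [kron_one_fin1]
    simp only [castM_trans]
    rw [kronF_castM_right' (show (2:ℕ) = 2^(0+1) by norm_num)]
    simp only [castM_trans]
    rw [kronF_castM_right' (show (2:ℕ)*2 = 2^(0+1+1) by norm_num)]
    simp only [castM_trans]
    rw [kronF_assoc']
    simp only [castM_trans]
    rw [Y4_eq, kronF_castM_left' (show (4:ℕ) = 2*2 by norm_num)]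
    simp only [castM_trans]
    rw [Y8_eq]
    simp only [castM_trans]
  rw [hY, show Pod 1 = castM (by norm_num : (8:ℕ) = 2^(2*1+1)) P3 from by rw [Pod],
    conj_castM, key8, castM_smul, SyI8_eq, castM_trans,
    one_eq_castM (show (4:ℕ) = 2^(2*1) by norm_num), kronF_castM_right' (show (4:ℕ) = 2^(2*1) by norm_num)]
  simp only [castM_trans]
  norm_num
lemma step_case (k : ℕ)
    (IH : (Pod (k+1))ᴴ * tpow sy (2 * (k+1) + 1) * Pod (k+1) =
      ((-1 : ℂ) ^ (k+1)) •
        castM (by rw [pow_succ]; ring)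
          (kronF sy (1 : Matrix (Fin (2 ^ (2 * (k+1)))) (Fin (2 ^ (2 * (k+1)))) ℂ))) :
    (Pod (k+2))ᴴ * tpow sy (2 * (k+2) + 1) * Pod (k+2) =
      ((-1 : ℂ) ^ (k+2)) •
        castM (by rw [pow_succ]; ring)
          (kronF sy (1 : Matrix (Fin (2 ^ (2 * (k+2)))) (Fin (2 ^ (2 * (k+2)))) ℂ)) := by
  have hY : tpow sy (2 * (k+2) + 1) =
      castM (by rw [show 2*(k+2)+1 = 2 + (2*(k+1)+1) by ring, pow_add, pow_succ] ; ring :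
          4 * 2 ^ (2 * (k+1) + 1) = 2 ^ (2 * (k+2) + 1))
        (kronF Y4 (tpow sy (2 * (k+1) + 1))) := by
    rw [tpow_congr sy (show 2*(k+1)+1+1+1 = 2*(k+2)+1 by ring)
        (by rw [show 2*(k+2)+1 = (2*(k+1)+1+1)+1 by ring]),
      tpow_succ', tpow_succ']
    rw [kronF_castM_right' (show 2 * 2^(2*(k+1)+1) = 2^(2*(k+1)+1+1) by rw [pow_succ, pow_succ]; ring)]
    simp only [castM_trans]
    rw [kronF_assoc']
    simp only [castM_trans]
    rw [Y4_eq, kronF_castM_left' (show (4:ℕ) = 2*2 by norm_num)]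
    simp only [castM_trans]
  rw [show Pod (k+2) =
      castM (by rw [show 2 * (k + 2) + 1 = (2 * (k + 1) + 1) + 2 by ring, pow_add]; ring)
        (kronF (1 : Matrix (Fin 4) (Fin 4) ℂ) (Pod (k + 1))) *
      castM (by rw [show 2 * (k + 2) + 1 = (2 * k + 2) + 3 by ring, pow_add]; ring)
        (kronF P3 (1 : Matrix (Fin (2 ^ (2 * k + 2))) (Fin (2 ^ (2 * k + 2))) ℂ)) from by rw [Pod]]
  rw [conj_mul_split, hY, conj_castM, conj_kronF]
  rw [Matrix.conjTranspose_one, Matrix.one_mul, Matrix.mul_one, IH]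
  rw [kronF_smul_right, castM_smul]
  rw [kronF_castM_right' (show 2 * 2^(2*(k+1)) = 2^(2*(k+1)+1) by rw [pow_succ]; ring)]
  simp only [castM_trans]
  rw [kronF_assoc']
  simp only [castM_trans]
  rw [Y8_eq, kronF_castM_left' (show (8:ℕ) = 4*2 by norm_num)]
  simp only [castM_trans]
  rw [one_eq_castM (show 2^(2*k+2) = 2^(2*(k+1)) by ring_nf),
    kronF_castM_right' (show 2^(2*k+2) = 2^(2*(k+1)) by ring_nf)]
  simp only [castM_trans]
  rw [Matrix.mul_smul, Matrix.smul_mul, conj_castM, conj_kronF,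
    Matrix.conjTranspose_one, Matrix.one_mul, Matrix.mul_one, key8]
  rw [kronF_smul_left, castM_smul, smul_smul]
  rw [SyI8_eq, kronF_castM_left' (show 2*4 = 8 by norm_num)]
  simp only [castM_trans]
  rw [(castM_trans (mul_assoc 2 4 (2^(2*k+2)))
      (show 2*(4*2^(2*k+2)) = 2^(2*(k+2)+1) by
        rw [show 2*(k+2)+1 = 3 + (2*k+2) by ring, pow_add, show 2*k+2 = 2*k+1+1 by ring, pow_succ, pow_succ]; ring) _).symm]
  rw [← kronF_assoc']
  simp only [castM_one]
  rw [kronF_one_one]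
  rw [one_eq_castM (show 2^(2*(k+2)) = 4 * 2^(2*k+2) by
        rw [show 2*(k+2) = 2 + (2*k+2) by ring, pow_add]; norm_num),
    kronF_castM_right' (show 2^(2*(k+2)) = 4 * 2^(2*k+2) by
        rw [show 2*(k+2) = 2 + (2*k+2) by ring, pow_add]; norm_num)]
  simp only [castM_trans]
  rw [show ((-1:ℂ)^(k+1) * -1) = (-1)^(k+2) by ring]
theorem Pod_conj_Y (k : ℕ) (hk : 1 ≤ k) :
    (Pod k)ᴴ * tpow sy (2 * k + 1) * Pod k =
      ((-1 : ℂ) ^ k) •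
        castM (by rw [pow_succ]; ring)
          (kronF sy (1 : Matrix (Fin (2 ^ (2 * k))) (Fin (2 ^ (2 * k))) ℂ)) := by
  obtain ⟨m, rfl⟩ : ∃ m, k = m + 1 := ⟨k - 1, by omega⟩
  clear hk
  induction m with
  | zero => exact base_case
  | succ n ih => exact step_case n ih
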